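/- Let n ≥ 1 and D ≥ 1 be integers. Then there is a constant C depending only on n and D such that for every prime p, every nonzero polynomial f ∈ 𝔽_p[x₁,…,xₙ] of total degree at most D, and every real T ≥ 1, the number of integer vectors x ∈ ℤⁿ with 0 < x_i ≤ T for all i and f(x mod p) = 0 is at most C·( Tⁿ·p^{−1} + T^{n−1} ). -/

import Mathlib

/-!
Reduce the box `(0, T]ⁿ ∩ ℤⁿ` modulo `p`. Each residue class contains at most `T/p + 1` integers
of `(0, T]`, so every fibre of the reduction has at most `(T/p + 1)ⁿ` points, while by
Schwartz–Zippel `f` has at most `deg f · sⁿ⁻¹` zeros on the image `Sⁿ`, where `s = #S ≤ min p T`.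
For `p ≤ T` this gives `deg f · (2T/p)ⁿ · pⁿ⁻¹`; for `T < p` the reduction is injective and it
gives `deg f · Tⁿ⁻¹`.
-/

open Finset Fintype MvPolynomial

theorem card_filter_piFinset_comp_le {ι α β : Type*} [Fintype ι] [DecidableEq ι]
    [DecidableEq α] [DecidableEq β] (S : Finset α) (φ : α → β) {m : ℕ}
    (hm : ∀ b, #{a ∈ S | φ a = b} ≤ m) (P : (ι → β) → Prop) [DecidablePred P] :
    #{x ∈ piFinset fun _ : ι => S | P (φ ∘ x)} ≤
      m ^ Fintype.card ι * #{y ∈ piFinset fun _ : ι => S.image φ | P y} := by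
  refine card_le_mul_card_image_of_maps_to (f := (φ ∘ ·)) ?_ _ fun y _ => ?_
  · intro x hx
    simp only [mem_filter, Fintype.mem_piFinset] at hx ⊢
    exact ⟨fun i => mem_image_of_mem φ (hx.1 i), hx.2⟩
  · calc #{x ∈ {x ∈ piFinset fun _ : ι => S | P (φ ∘ x)} | φ ∘ x = y}
        ≤ #(piFinset fun i => {a ∈ S | φ a = y i}) := by
          refine card_le_card fun x hx => ?_
          simp only [mem_filter, Fintype.mem_piFinset] at hx ⊢
          exact fun i => ⟨hx.1.1 i, congrFun hx.2 i⟩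
      _ = ∏ i, #{a ∈ S | φ a = y i} := Fintype.card_piFinset _
      _ ≤ m ^ Fintype.card ι := Finset.prod_le_pow_card _ _ _ fun i _ => hm (y i)

theorem card_filter_piFinset_eval_eq_zero_le {R : Type*} [CommRing R] [IsDomain R]
    [DecidableEq R] {n : ℕ} {f : MvPolynomial (Fin (n + 1)) R} (hf : f ≠ 0) (S : Finset R) :
    #{x ∈ piFinset fun _ => S | eval x f = 0} ≤ f.totalDegree * #S ^ n := by
  obtain rfl | hS := S.eq_empty_or_nonempty
  · simp
  have hsz := schwartz_zippel_totalDegree hf S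
  have hS' : (0 : ℚ≥0) < #S := by exact_mod_cast hS.card_pos
  rw [div_le_div_iff₀ (by positivity) hS', pow_succ, ← mul_assoc] at hsz
  exact_mod_cast le_of_mul_le_mul_right hsz hS'

theorem card_filter_piFinset_eval_comp_eq_zero_le {α R : Type*} [CommRing R] [IsDomain R]
    [DecidableEq α] [DecidableEq R] {n m : ℕ} {f : MvPolynomial (Fin (n + 1)) R} (hf : f ≠ 0) (S : Finset α)
    (φ : α → R) (hm : ∀ r, #{a ∈ S | φ a = r} ≤ m) :
    #{x ∈ piFinset fun _ => S | eval (φ ∘ x) f = 0} ≤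
      m ^ (n + 1) * (f.totalDegree * #(S.image φ) ^ n) :=
  calc _ ≤ m ^ (n + 1) * #{y ∈ piFinset fun _ => S.image φ | eval y f = 0} := by
        simpa using card_filter_piFinset_comp_le S φ hm (fun y => eval y f = 0)
    _ ≤ _ := Nat.mul_le_mul_left _ (card_filter_piFinset_eval_eq_zero_le hf _)

theorem card_filter_Ioc_intCast_eq_le (p : ℕ) [NeZero p] {a b : ℤ} (hab : a ≤ b) (r : ZMod p) :
    (#{x ∈ Ioc a b | ((x : ℤ) : ZMod p) = r} : ℝ) ≤ (b - a) / p + 1 := by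
  have hp : (0 : ℤ) < p := by exact_mod_cast Nat.pos_of_neZero p
  set v : ℤ := (r.val : ℤ)
  have hfiber :
      {x ∈ Ioc a b | ((x : ℤ) : ZMod p) = r} = {x ∈ Ioc a b | x ≡ v [ZMOD p]} := by
    ext x
    simp [v, ← ZMod.intCast_eq_intCast_iff]
  have hcard := Int.Ioc_filter_modEq_card a b hp v
  rw [← hfiber] at hcard
  set u : ℚ := (b - v) / ((p : ℤ) : ℚ)
  set w : ℚ := (a - v) / ((p : ℤ) : ℚ)
  have hq : (#{x ∈ Ioc a b | ((x : ℤ) : ZMod p) = r} : ℚ) ≤ (b - a) / p + 1 := by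
    have huw : u - w = (b - a) / p := by simp only [u, w]; push_cast; ring
    have hab' : (0 : ℚ) ≤ (b - a) / p :=
      div_nonneg (sub_nonneg.2 (by exact_mod_cast hab)) (Nat.cast_nonneg p)
    have hcardq :
        (#{x ∈ Ioc a b | ((x : ℤ) : ZMod p) = r} : ℚ) = max ((⌊u⌋ - ⌊w⌋ : ℤ) : ℚ) 0 := by
      rw [← Int.cast_natCast, hcard, Int.cast_max, Int.cast_zero]
    rw [hcardq]
    exact max_le (by push_cast; linarith [Int.floor_le u, Int.sub_one_lt_floor w]) (by linarith)
  exact_mod_cast hq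

theorem card_filter_Ioc_floor_intCast_eq_le (p : ℕ) [NeZero p] {T : ℝ} (hT : 0 ≤ T)
    (r : ZMod p) : (#{x ∈ Ioc 0 ⌊T⌋ | ((x : ℤ) : ZMod p) = r} : ℝ) ≤ T / p + 1 := by
  have h := card_filter_Ioc_intCast_eq_le p (Int.floor_nonneg.2 hT) r
  rw [Int.cast_zero, sub_zero] at h
  have hp : (0 : ℝ) ≤ p := Nat.cast_nonneg p
  linarith [div_le_div_of_nonneg_right (Int.floor_le T) hp]

section PrimeField

variable {p : ℕ} [Fact p.Prime] {n : ℕ} {f : MvPolynomial (Fin (n + 1)) (ZMod p)} {T : ℝ}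

theorem card_zeros_box_le_of_prime_le (hf : f ≠ 0) (hpT : (p : ℝ) ≤ T) :
    (#{x ∈ piFinset fun _ : Fin (n + 1) => Ioc 0 ⌊T⌋ | eval (Int.cast ∘ x) f = 0} : ℝ) ≤
      f.totalDegree * 2 ^ (n + 1) * (T ^ (n + 1) * (p : ℝ)⁻¹) := by
  have hp : (0 : ℝ) < p := by exact_mod_cast Nat.pos_of_neZero p
  have hT : 0 ≤ T := hp.le.trans hpT
  have hm (r : ZMod p) : #{x ∈ Ioc 0 ⌊T⌋ | ((x : ℤ) : ZMod p) = r} ≤ ⌊2 * T / p⌋₊ := by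
    refine Nat.le_floor ((card_filter_Ioc_floor_intCast_eq_le p hT r).trans ?_)
    rw [mul_div_assoc]
    linarith [(one_le_div hp).2 hpT]
  have hs : (#((Ioc 0 ⌊T⌋).image (Int.cast : ℤ → ZMod p)) : ℝ) ≤ p := by
    exact_mod_cast (card_le_univ _).trans (ZMod.card p).le
  calc (_ : ℝ) ≤ (⌊2 * T / p⌋₊ : ℝ) ^ (n + 1) *
        (f.totalDegree * #((Ioc 0 ⌊T⌋).image (Int.cast : ℤ → ZMod p)) ^ n) := by
        exact_mod_cast card_filter_piFinset_eval_comp_eq_zero_le hf _ _ hm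
    _ ≤ (2 * T / p) ^ (n + 1) * (f.totalDegree * p ^ n) := by
        gcongr
        exact Nat.floor_le (by positivity : (0 : ℝ) ≤ 2 * T / p)
    _ = f.totalDegree * 2 ^ (n + 1) * (T ^ (n + 1) * (p : ℝ)⁻¹) := by
        rw [div_pow, pow_succ (p : ℝ) n]
        field_simp
        ring

theorem card_zeros_box_le_of_lt_prime (hf : f ≠ 0) (hT : 0 ≤ T) (hTp : T < p) :
    (#{x ∈ piFinset fun _ : Fin (n + 1) => Ioc 0 ⌊T⌋ | eval (Int.cast ∘ x) f = 0} : ℝ) ≤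
      f.totalDegree * T ^ n := by
  have hp : (0 : ℝ) < p := by exact_mod_cast Nat.pos_of_neZero p
  have hm (r : ZMod p) : #{x ∈ Ioc 0 ⌊T⌋ | ((x : ℤ) : ZMod p) = r} ≤ 1 := by
    have h := card_filter_Ioc_floor_intCast_eq_le p hT r
    have : T / p < 1 := (div_lt_one hp).2 hTp
    have : (#{x ∈ Ioc 0 ⌊T⌋ | ((x : ℤ) : ZMod p) = r} : ℝ) < 2 := by linarith
    exact_mod_cast Nat.lt_succ_iff.1 (by exact_mod_cast this)
  have hs : (#((Ioc 0 ⌊T⌋).image (Int.cast : ℤ → ZMod p)) : ℝ) ≤ T := by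
    have h := card_image_le (s := Ioc 0 ⌊T⌋) (f := (Int.cast : ℤ → ZMod p))
    rw [Int.card_Ioc, sub_zero] at h
    have : (#((Ioc 0 ⌊T⌋).image (Int.cast : ℤ → ZMod p)) : ℤ) ≤ ⌊T⌋ := by
      have := Int.floor_nonneg.2 hT
      omega
    exact le_trans (by exact_mod_cast this) (Int.floor_le T)
  calc (_ : ℝ) ≤ (1 : ℝ) ^ (n + 1) *
        (f.totalDegree * #((Ioc 0 ⌊T⌋).image (Int.cast : ℤ → ZMod p)) ^ n) := by
        exact_mod_cast card_filter_piFinset_eval_comp_eq_zero_le hf _ _ hm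
    _ ≤ f.totalDegree * T ^ n := by
        rw [one_pow, one_mul]
        gcongr

end PrimeField

theorem stmt13_general (n D : ℕ) (hn : 1 ≤ n) :
    ∃ C : ℝ, ∀ (p : ℕ), p.Prime →
      ∀ (f : MvPolynomial (Fin n) (ZMod p)), f ≠ 0 → f.totalDegree ≤ D →
      ∀ T : ℝ, 1 ≤ T →
      (Set.ncard {x : Fin n → ℤ |
          (∀ i, 0 < x i ∧ ((x i : ℝ)) ≤ T) ∧
          MvPolynomial.eval (fun i => ((x i : ZMod p))) f = 0} : ℝ) ≤
        C * (T ^ n * (p : ℝ)⁻¹ + T ^ (n - 1)) := by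
  obtain ⟨n, rfl⟩ := Nat.exists_eq_add_of_le' hn
  refine ⟨D * 2 ^ (n + 1), fun p hp f hf hfD T hT => ?_⟩
  have := Fact.mk hp
  have hbox : {x : Fin (n + 1) → ℤ | (∀ i, 0 < x i ∧ ((x i : ℝ)) ≤ T) ∧
      MvPolynomial.eval (fun i => ((x i : ZMod p))) f = 0} =
      ↑{x ∈ piFinset fun _ : Fin (n + 1) => Ioc 0 ⌊T⌋ | eval (Int.cast ∘ x) f = 0} := by
    ext x
    simp [Int.le_floor, Function.comp_def]
  have hD : (f.totalDegree : ℝ) ≤ D := by exact_mod_cast hfD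
  rw [hbox, Set.ncard_coe_finset, Nat.add_sub_cancel]
  rcases le_or_gt (p : ℝ) T with hpT | hTp
  · calc _ ≤ f.totalDegree * 2 ^ (n + 1) * (T ^ (n + 1) * (p : ℝ)⁻¹) :=
          card_zeros_box_le_of_prime_le hf hpT
      _ ≤ D * 2 ^ (n + 1) * (T ^ (n + 1) * (p : ℝ)⁻¹ + T ^ n) := by
          gcongr
          exact le_add_of_nonneg_right (by positivity)
  · calc _ ≤ f.totalDegree * T ^ n := card_zeros_box_le_of_lt_prime hf (by linarith) hTp
      _ ≤ D * 2 ^ (n + 1) * (T ^ (n + 1) * (p : ℝ)⁻¹ + T ^ n) := by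
          gcongr ?_ * ?_
          · have h2 : (1 : ℝ) ≤ 2 ^ (n + 1) := one_le_pow₀ one_le_two
            exact hD.trans (le_mul_of_one_le_right (Nat.cast_nonneg D) h2)
          · exact le_add_of_nonneg_left (by positivity)

theorem stmt13 (n D : ℕ) (hn : 1 ≤ n) (hD : 1 ≤ D) :
    ∃ C : ℝ, ∀ (p : ℕ), p.Prime →
      ∀ (f : MvPolynomial (Fin n) (ZMod p)), f ≠ 0 → f.totalDegree ≤ D →
      ∀ T : ℝ, 1 ≤ T →
      (Set.ncard {x : Fin n → ℤ |
          (∀ i, 0 < x i ∧ ((x i : ℝ)) ≤ T) ∧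
          MvPolynomial.eval (fun i => ((x i : ZMod p))) f = 0} : ℝ) ≤
        C * (T ^ n * (p : ℝ)⁻¹ + T ^ (n - 1)) :=
  stmt13_general n D hn
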